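/- If δ is a Woodin for strong compactness cardinal, then δ is an inaccessible cardinal and δ is a limit of <δ-strongly compact cardinals. -/

import Mathlib

/-!
A framework for formalizing large-cardinal notions from
"Woodin for strong compactness cardinals" over the Mathlib model `ZFSet`
of ZFC.  The ambient set-theoretic universe `V` is the type `ZFSet`;
classes are sets `Set ZFSet`; everything is relativised to a "universe
class" `W : Set ZFSet` (the ambient universe being `W = Set.univ`), so
that the same definitions can also be interpreted inside transitive set
models of ZFC (used to express the forcing/consistency results).
-/

namespace WSC

/-! ### First-order formulas in the language of set theory -/

/-- First-order formulas in the language `{∈}`, with `n` free (de Bruijn) variables. -/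
inductive Fml : ℕ → Type where
  | mem {n} : Fin n → Fin n → Fml n
  | eq  {n} : Fin n → Fin n → Fml n
  | not {n} : Fml n → Fml n
  | and {n} : Fml n → Fml n → Fml n
  | ex  {n} : Fml (n + 1) → Fml n

namespace Fml

/-- Realization of a formula over the class `C`, with all quantifiers relativised to `C`. -/
def Realize (C : Set ZFSet) : ∀ {n}, Fml n → (Fin n → ZFSet) → Prop
  | _, .mem i j, v => v i ∈ v j
  | _, .eq i j, v => v i = v j
  | _, .not φ, v => ¬ Realize C φ v
  | _, .and φ ψ, v => Realize C φ v ∧ Realize C ψ v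
  | _, .ex φ, v => ∃ x ∈ C, Realize C φ (Fin.snoc v x)

def or {n} (φ ψ : Fml n) : Fml n := .not (.and (.not φ) (.not ψ))
def imp {n} (φ ψ : Fml n) : Fml n := Fml.or (.not φ) ψ
def iff {n} (φ ψ : Fml n) : Fml n := .and (imp φ ψ) (imp ψ φ)
def all {n} (φ : Fml (n + 1)) : Fml n := .not (.ex (.not φ))

/-- Universal closure. -/
def alls : ∀ {n}, Fml n → Fml 0
  | 0, φ => φ
  | _ + 1, φ => alls (all φ)

/-- Renaming of variables. -/
def rename : ∀ {n m}, (Fin n → Fin m) → Fml n → Fml m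
  | _, _, f, .mem i j => .mem (f i) (f j)
  | _, _, f, .eq i j => .eq (f i) (f j)
  | _, _, f, .not φ => .not (rename f φ)
  | _, _, f, .and φ ψ => .and (rename f φ) (rename f ψ)
  | _, _, f, .ex φ => .ex (rename (Fin.snoc (fun i => (f i).castSucc) (Fin.last _)) φ)

end Fml

/-- A sentence `φ` holds in the class `C`. -/
def Sat (C : Set ZFSet) (φ : Fml 0) : Prop := Fml.Realize C φ (fun i => i.elim0)

/-! ### The ZFC axioms -/

def extAx : Fml 0 :=
  Fml.all (Fml.all (Fml.imp (Fml.all (Fml.iff (.mem 2 0) (.mem 2 1))) (.eq 0 1)))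

def pairAx : Fml 0 := Fml.all (Fml.all (Fml.ex (Fml.and (.mem 0 2) (.mem 1 2))))

def unionAx : Fml 0 :=
  Fml.all (Fml.ex (Fml.all (Fml.all
    (Fml.imp (Fml.and (.mem 2 3) (.mem 3 0)) (.mem 2 1)))))

def powerAx : Fml 0 :=
  Fml.all (Fml.ex (Fml.all
    (Fml.imp (Fml.all (Fml.imp (.mem 3 2) (.mem 3 0))) (.mem 2 1))))

def infAx : Fml 0 :=
  Fml.ex (Fml.and
    (Fml.ex (Fml.and (.mem 1 0) (Fml.all (Fml.not (.mem 2 1)))))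
    (Fml.all (Fml.imp (.mem 1 0)
      (Fml.ex (Fml.and (.mem 2 0)
        (Fml.all (Fml.iff (.mem 3 2) (Fml.or (.mem 3 1) (.eq 3 1)))))))))

def foundAx : Fml 0 :=
  Fml.all (Fml.imp (Fml.ex (.mem 1 0))
    (Fml.ex (Fml.and (.mem 1 0) (Fml.all (Fml.imp (.mem 2 1) (Fml.not (.mem 2 0)))))))

def choiceAx : Fml 0 :=
  Fml.all (Fml.imp
    (Fml.and
      (Fml.all (Fml.imp (.mem 1 0) (Fml.ex (.mem 2 1))))
      (Fml.all (Fml.all (Fml.imp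
        (Fml.and (.mem 1 0) (Fml.and (.mem 2 0) (Fml.ex (Fml.and (.mem 3 1) (.mem 3 2)))))
        (.eq 1 2)))))
    (Fml.ex (Fml.all (Fml.imp (.mem 2 0)
      (Fml.ex (Fml.and (Fml.and (.mem 3 2) (.mem 3 1))
        (Fml.all (Fml.imp (Fml.and (.mem 4 2) (.mem 4 1)) (.eq 4 3)))))))))

/-- An instance of the separation schema, for a formula `φ` with parameters
`0, …, n-1` and distinguished variable `n`. -/
def sepAx (n : ℕ) (φ : Fml (n + 1)) : Fml 0 :=
  Fml.alls ((Fml.ex (Fml.all (Fml.iff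
    (Fml.mem (⟨n + 2, by omega⟩ : Fin (n + 3)) ⟨n + 1, by omega⟩)
    (Fml.and (Fml.mem (⟨n + 2, by omega⟩ : Fin (n + 3)) ⟨n, by omega⟩)
      (Fml.rename (fun i => if h : (i : ℕ) < n then (⟨i, by omega⟩ : Fin (n + 3))
        else ⟨n + 2, by omega⟩) φ))))) : Fml (n + 1))

/-- An instance of the collection schema, for a formula `φ` with parameters
`0, …, n-1` and distinguished variables `n` (input) and `n+1` (output). -/
def collAx (n : ℕ) (φ : Fml (n + 2)) : Fml 0 :=
  let φ' : Fml (n + 4) := Fml.rename (fun i => if h : (i : ℕ) < n then (⟨i, by omega⟩ : Fin (n + 4))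
    else ⟨(i : ℕ) + 2, by have := i.isLt; omega⟩) φ
  Fml.alls ((Fml.ex (Fml.all
    (Fml.imp (Fml.mem (⟨n + 2, by omega⟩ : Fin (n + 3)) ⟨n, by omega⟩)
      (Fml.imp (Fml.ex φ')
        (Fml.ex (Fml.and (Fml.mem (⟨n + 3, by omega⟩ : Fin (n + 4)) ⟨n + 1, by omega⟩) φ')))))) : Fml (n + 1))

/-- The ZFC axioms. -/
def ZFCax : Set (Fml 0) :=
  {extAx, pairAx, unionAx, powerAx, infAx, foundAx, choiceAx} ∪
    (⋃ n, Set.range (sepAx n)) ∪ (⋃ n, Set.range (collAx n))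

/-- A transitive set model of ZFC. -/
def IsZFModel (m : ZFSet) : Prop := m.IsTransitive ∧ ∀ φ ∈ ZFCax, Sat m.toSet φ

/-- A countable transitive model of ZFC. -/
def IsCtm (m : ZFSet) : Prop := IsZFModel m ∧ m.toSet.Countable

/-! ### Basic set-theoretic notions -/

/-- `x` is a (von Neumann) ordinal: a transitive set of transitive sets. -/
def IsOrd (x : ZFSet) : Prop := x.IsTransitive ∧ ∀ y ∈ x, ZFSet.IsTransitive y

/-- `x ≤ y` for ordinals. -/
def oLe (x y : ZFSet) : Prop := x ∈ y ∨ x = y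

/-- `f` is a function with domain `d` (coded as a set of Kuratowski pairs). -/
def IsFuncOn (d f : ZFSet) : Prop :=
  (∀ p ∈ f, ∃ a b : ZFSet, a ∈ d ∧ p = a.pair b) ∧ ∀ a ∈ d, ∃! b : ZFSet, a.pair b ∈ f

/-- All values of the (partial) function `f` lie in `b`. -/
def MapsInto (f b : ZFSet) : Prop := ∀ x y : ZFSet, x.pair y ∈ f → y ∈ b

/-- The function `f` is injective. -/
def InjFun (f : ZFSet) : Prop := ∀ x x' y : ZFSet, x.pair y ∈ f → x'.pair y ∈ f → x = x'

/-- `|a| ≤ |b|`, witnessed by an injection belonging to the universe class `W`. -/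
def SetLeIn (W : Set ZFSet) (a b : ZFSet) : Prop :=
  ∃ f ∈ W, IsFuncOn a f ∧ MapsInto f b ∧ InjFun f

/-- `κ` is a cardinal (relative to the universe class `W`). -/
def IsCardIn (W : Set ZFSet) (κ : ZFSet) : Prop :=
  IsOrd κ ∧ ∀ α ∈ κ, ¬ SetLeIn W κ α

/-- `M` is a transitive class. -/
def TransClass (M : Set ZFSet) : Prop := ∀ x ∈ M, ∀ y : ZFSet, y ∈ x → y ∈ M

/-- An elementary embedding `j : (W, ∈) → (M, ∈)` between two classes. -/
structure ElemEmb (W M : Set ZFSet) where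
  toFun : ZFSet → ZFSet
  maps : ∀ x ∈ W, toFun x ∈ M
  elem : ∀ {n : ℕ} (φ : Fml n) (v : Fin n → ZFSet), (∀ i, v i ∈ W) →
    (Fml.Realize W φ v ↔ Fml.Realize M φ (fun i => toFun (v i)))

/-- `κ` is the critical point of `j`: the least ordinal moved. -/
def IsCrit {W M : Set ZFSet} (j : ElemEmb W M) (κ : ZFSet) : Prop :=
  IsOrd κ ∧ j.toFun κ ≠ κ ∧ ∀ α ∈ κ, j.toFun α = α

/-! ### The rank hierarchy -/

/-- `x ∈ V_lam`. -/
def VMem (lam x : ZFSet) : Prop := x.rank < lam.rank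

/-- `V_lam ⊆ M` (with `V_lam` computed in the universe class `W`). -/
def VInclIn (W M : Set ZFSet) (lam : ZFSet) : Prop := ∀ x ∈ W, VMem lam x → x ∈ M

/-- `A ⊆ V_δ`. -/
def SubV (A δ : ZFSet) : Prop := ∀ x ∈ A, VMem δ x

/-- `A ∩ V_lam = B ∩ V_lam`. -/
def AgreeBelowIn (W : Set ZFSet) (lam A B : ZFSet) : Prop :=
  ∀ x ∈ W, VMem lam x → (x ∈ A ↔ x ∈ B)

/-- `A ∩ lam = B ∩ lam` (for sets of ordinals). -/
def AgreeMem (lam A B : ZFSet) : Prop := ∀ ξ ∈ lam, (ξ ∈ A ↔ ξ ∈ B)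

/-! ### Covering properties -/

/-- `M ⊨ |s| < t`: in `M` there is an injection of `s` into some ordinal `β ∈ t`. -/
def CardLtIn (M : Set ZFSet) (s t : ZFSet) : Prop :=
  ∃ β f : ZFSet, β ∈ t ∧ f ∈ M ∧ IsFuncOn s f ∧ MapsInto f β ∧ InjFun f

/-- `j` satisfies the weak `lam`-covering property (with target class `M`):
there is `s ∈ M` with `j '' lam ⊆ s` and `M ⊨ |s| < j κ`. -/
def WCovers (M : Set ZFSet) (j : ZFSet → ZFSet) (κ lam : ZFSet) : Prop :=
  ∃ s ∈ M, (∀ α ∈ lam, j α ∈ s) ∧ CardLtIn M s (j κ)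

/-- `j` satisfies the (full) `lam`-covering property: every `X ∈ W` with
`X ⊆ M` and `|X| ≤ lam` is covered by some `s ∈ M` with `M ⊨ |s| < j κ`. -/
def CoversIn (W M : Set ZFSet) (j : ZFSet → ZFSet) (κ lam : ZFSet) : Prop :=
  ∀ X ∈ W, X.toSet ⊆ M → SetLeIn W X lam → ∃ s ∈ M, X ⊆ s ∧ CardLtIn M s (j κ)

/-! ### Strongness -/

/-- `κ` is `lam`-strong. -/
def LamStrongIn (W : Set ZFSet) (κ lam : ZFSet) : Prop :=
  ∃ M : Set ZFSet, M ⊆ W ∧ TransClass M ∧ ∃ j : ElemEmb W M,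
    IsCrit j κ ∧ lam ∈ j.toFun κ ∧ VInclIn W M lam

/-- `κ` is `lam`-strong for `A`. -/
def LamStrongForIn (W : Set ZFSet) (κ lam A : ZFSet) : Prop :=
  ∃ M : Set ZFSet, M ⊆ W ∧ TransClass M ∧ ∃ j : ElemEmb W M,
    IsCrit j κ ∧ lam ∈ j.toFun κ ∧ VInclIn W M lam ∧ AgreeBelowIn W lam A (j.toFun A)

/-- `κ` is `<δ`-strong. -/
def LtStrongIn (W : Set ZFSet) (κ δ : ZFSet) : Prop :=
  ∀ lam : ZFSet, oLe κ lam → lam ∈ δ → LamStrongIn W κ lam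

/-- `κ` is `<δ`-strong for `A`. -/
def LtStrongForIn (W : Set ZFSet) (κ δ A : ZFSet) : Prop :=
  ∀ lam : ZFSet, oLe κ lam → lam ∈ δ → LamStrongForIn W κ lam A

/-! ### Strong compactness -/

/-- `κ` is `lam`-strongly compact (there is an embedding with critical point `κ`,
`j κ > lam`, satisfying the weak `lam`-covering property). -/
def LamSCIn (W : Set ZFSet) (κ lam : ZFSet) : Prop :=
  ∃ M : Set ZFSet, M ⊆ W ∧ TransClass M ∧ ∃ j : ElemEmb W M,
    IsCrit j κ ∧ lam ∈ j.toFun κ ∧ WCovers M j.toFun κ lam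

/-- `κ` is `lam`-strongly compact for the set of ordinals `A`: there is a
`lam`-strong compactness embedding `j` (one with the full `lam`-covering
property) with critical point `κ` and `A ∩ lam = j A ∩ lam`. -/
def LamSCForIn (W : Set ZFSet) (κ lam A : ZFSet) : Prop :=
  ∃ M : Set ZFSet, M ⊆ W ∧ TransClass M ∧ ∃ j : ElemEmb W M,
    IsCrit j κ ∧ lam ∈ j.toFun κ ∧ CoversIn W M j.toFun κ lam ∧ AgreeMem lam A (j.toFun A)

/-- `κ` is `<δ`-strongly compact. -/
def LtSCIn (W : Set ZFSet) (κ δ : ZFSet) : Prop :=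
  ∀ lam : ZFSet, oLe κ lam → lam ∈ δ → LamSCIn W κ lam

/-- `κ` is `<δ`-strongly compact for `A`. -/
def LtSCForIn (W : Set ZFSet) (κ δ A : ZFSet) : Prop :=
  ∀ lam : ZFSet, oLe κ lam → lam ∈ δ → LamSCForIn W κ lam A

/-! ### Supercompactness -/

/-- `M` is closed under `lam`-sequences (from the universe class `W`). -/
def SeqClosedIn (W M : Set ZFSet) (lam : ZFSet) : Prop :=
  ∀ f ∈ W, IsFuncOn lam f → (∀ x y : ZFSet, x.pair y ∈ f → y ∈ M) → f ∈ M

/-- `κ` is `lam`-supercompact. -/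
def LamSupercompactIn (W : Set ZFSet) (κ lam : ZFSet) : Prop :=
  ∃ M : Set ZFSet, M ⊆ W ∧ TransClass M ∧ ∃ j : ElemEmb W M,
    IsCrit j κ ∧ lam ∈ j.toFun κ ∧ SeqClosedIn W M lam

/-- `κ` is `lam`-supercompact for `A`. -/
def LamSupercompactForIn (W : Set ZFSet) (κ lam A : ZFSet) : Prop :=
  ∃ M : Set ZFSet, M ⊆ W ∧ TransClass M ∧ ∃ j : ElemEmb W M,
    IsCrit j κ ∧ lam ∈ j.toFun κ ∧ SeqClosedIn W M lam ∧ AgreeBelowIn W lam A (j.toFun A)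

/-- `κ` is `<δ`-supercompact. -/
def LtSupercompactIn (W : Set ZFSet) (κ δ : ZFSet) : Prop :=
  ∀ lam : ZFSet, oLe κ lam → lam ∈ δ → LamSupercompactIn W κ lam

/-- `κ` is `<δ`-supercompact for `A`. -/
def LtSupercompactForIn (W : Set ZFSet) (κ δ A : ZFSet) : Prop :=
  ∀ lam : ZFSet, oLe κ lam → lam ∈ δ → LamSupercompactForIn W κ lam A

/-! ### The global large-cardinal notions -/

/-- `δ` is a Woodin cardinal. -/
def WoodinIn (W : Set ZFSet) (δ : ZFSet) : Prop :=
  IsCardIn W δ ∧ ∀ A ∈ W, SubV A δ → ∃ κ, κ ∈ δ ∧ LtStrongForIn W κ δ A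

/-- `δ` is a Woodin for strong compactness cardinal. -/
def WoodinSCIn (W : Set ZFSet) (δ : ZFSet) : Prop :=
  IsCardIn W δ ∧ ∀ A ∈ W, A ⊆ δ → ∃ κ, κ ∈ δ ∧ LtSCForIn W κ δ A

/-- `δ` is a Vopěnka cardinal. -/
def VopenkaIn (W : Set ZFSet) (δ : ZFSet) : Prop :=
  IsCardIn W δ ∧ ∀ A ∈ W, SubV A δ → ∃ κ, κ ∈ δ ∧ LtSupercompactForIn W κ δ A

/-- `δ` is Woodin and a limit of `<δ`-supercompact cardinals. -/
def WoodinLimSupercompactIn (W : Set ZFSet) (δ : ZFSet) : Prop :=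
  WoodinIn W δ ∧ ∀ α ∈ δ, ∃ κ : ZFSet, α ∈ κ ∧ κ ∈ δ ∧ LtSupercompactIn W κ δ

/-! ### Inaccessibility -/

/-- `δ` is a regular ordinal: the range of any function from a smaller
ordinal into `δ` is bounded. -/
def RegularIn (W : Set ZFSet) (δ : ZFSet) : Prop :=
  IsOrd δ ∧ ∀ α ∈ δ, ∀ f ∈ W, IsFuncOn α f → MapsInto f δ →
    ∃ β ∈ δ, ∀ x y : ZFSet, x.pair y ∈ f → y ∈ β

/-- The power set of `x` relative to `W`. -/
def powersetIn (W : Set ZFSet) (x : ZFSet) : ZFSet := ZFSet.sep (fun z => z ∈ W) x.powerset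

/-- `δ` is a strong limit cardinal. -/
def StrongLimitIn (W : Set ZFSet) (δ : ZFSet) : Prop :=
  IsCardIn W δ ∧ ∀ α ∈ δ, ∃ β ∈ δ, SetLeIn W (powersetIn W α) β

/-- `δ` is inaccessible: an uncountable regular strong limit cardinal. -/
def InaccessibleIn (W : Set ZFSet) (δ : ZFSet) : Prop :=
  ZFSet.omega ∈ δ ∧ IsCardIn W δ ∧ RegularIn W δ ∧ StrongLimitIn W δ

/-! ### Ultrafilters and measurability -/

/-- Relative complement `a \ b`. -/
def zdiff (a b : ZFSet) : ZFSet := ZFSet.sep (fun x => x ∉ b) a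

/-- Intersection `a ∩ b`. -/
def zinter (a b : ZFSet) : ZFSet := ZFSet.sep (fun x => x ∈ b) a

/-- `U` is a nonprincipal `α`-complete ultrafilter on `α`. -/
def IsUfOnIn (W : Set ZFSet) (α U : ZFSet) : Prop :=
  (∀ x ∈ U, x ⊆ α) ∧ α ∈ U ∧ (∅ : ZFSet) ∉ U ∧
  (∀ x ∈ U, ∀ y : ZFSet, y ∈ W → y ⊆ α → x ⊆ y → y ∈ U) ∧
  (∀ x ∈ W, x ⊆ α → (x ∈ U ∨ zdiff α x ∈ U)) ∧
  (∀ β ∈ α, ∀ g ∈ W, IsFuncOn β g → MapsInto g U →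
    ZFSet.sep (fun ξ => ∀ p q : ZFSet, p.pair q ∈ g → ξ ∈ q) α ∈ U) ∧
  (∀ ξ ∈ α, ZFSet.sep (fun x => x = ξ) α ∉ U)

/-- `U` is a normal ultrafilter on `α`: a nonprincipal `α`-complete
ultrafilter closed under diagonal intersections. -/
def IsNormalUfOnIn (W : Set ZFSet) (α U : ZFSet) : Prop :=
  IsUfOnIn W α U ∧
    ∀ g ∈ W, IsFuncOn α g → MapsInto g U →
      ZFSet.sep (fun ξ => ∀ p q : ZFSet, p.pair q ∈ g → p ∈ ξ → ξ ∈ q) α ∈ U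

/-- `α` is a measurable cardinal. -/
def MeasurableIn (W : Set ZFSet) (α : ZFSet) : Prop := ∃ U ∈ W, IsUfOnIn W α U

/-! ### Functions `f : δ → δ` and closure points -/

/-- `f` codes a function from `δ` to `δ`. -/
def FuncSelf (δ f : ZFSet) : Prop := IsFuncOn δ f ∧ MapsInto f δ

/-- `κ` is a closure point of `f`, i.e. `f '' κ ⊆ κ`. -/
def ClosurePt (f κ : ZFSet) : Prop := ∀ x y : ZFSet, x.pair y ∈ f → x ∈ κ → y ∈ κ

/-! ### GCH -/

/-- GCH: for every infinite cardinal `κ`, any family of subsets of `κ` has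
size at most `κ` or size at least that of the full power set of `κ`. -/
def GCHIn (W : Set ZFSet) : Prop :=
  ∀ κ ∈ W, IsCardIn W κ → oLe ZFSet.omega κ →
    ∀ X ∈ W, (∀ z ∈ X, z ⊆ κ) → (SetLeIn W X κ ∨ SetLeIn W (powersetIn W κ) X)

/-! ### Forcing -/

/-- `(P, R)` is a forcing notion (a preordered set, `x.pair y ∈ R` meaning
`x ≤ y`, i.e. `x` is stronger than `y`). -/
def IsPoset (P R : ZFSet) : Prop :=
  (∀ p ∈ P, p.pair p ∈ R) ∧
  (∀ p q r : ZFSet, p.pair q ∈ R → q.pair r ∈ R → p.pair r ∈ R) ∧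
  (∀ x y : ZFSet, x.pair y ∈ R → x ∈ P ∧ y ∈ P)

/-- `G` is an `m`-generic filter on the forcing notion `(P, R) ∈ m`. -/
def IsGenericFilter (m P R G : ZFSet) : Prop :=
  G ⊆ P ∧
  (∀ p ∈ G, ∀ q ∈ P, p.pair q ∈ R → q ∈ G) ∧
  (∀ p ∈ G, ∀ q ∈ G, ∃ r ∈ G, r.pair p ∈ R ∧ r.pair q ∈ R) ∧
  (∀ D ∈ m, (D ⊆ P ∧ ∀ p ∈ P, ∃ q ∈ D, q.pair p ∈ R) → ∃ q, q ∈ G ∧ q ∈ D)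

/-- `n = m[G]` : `n` is a transitive ZFC-model extending `m` and containing
`G`, and is the least such. -/
def IsGenericExt (m G n : ZFSet) : Prop :=
  IsZFModel n ∧ m ⊆ n ∧ G ∈ n ∧
    ∀ n' : ZFSet, IsZFModel n' → m ⊆ n' → G ∈ n' → n ⊆ n'

/-- `n` is a (set-)forcing extension of the transitive model `m`. -/
def IsForcingExt (m n : ZFSet) : Prop :=
  ∃ P R G : ZFSet, P ∈ m ∧ R ∈ m ∧ IsPoset P R ∧
    IsGenericFilter m P R G ∧ IsGenericExt m G n

/-! ### Ambient (full-universe) abbreviations -/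

abbrev LamStrong (κ lam : ZFSet) : Prop := LamStrongIn Set.univ κ lam
abbrev LamStrongFor (κ lam A : ZFSet) : Prop := LamStrongForIn Set.univ κ lam A
abbrev LtStrong (κ δ : ZFSet) : Prop := LtStrongIn Set.univ κ δ
abbrev LtStrongFor (κ δ A : ZFSet) : Prop := LtStrongForIn Set.univ κ δ A
abbrev LamSC (κ lam : ZFSet) : Prop := LamSCIn Set.univ κ lam
abbrev LamSCFor (κ lam A : ZFSet) : Prop := LamSCForIn Set.univ κ lam A
abbrev LtSC (κ δ : ZFSet) : Prop := LtSCIn Set.univ κ δ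
abbrev LtSCFor (κ δ A : ZFSet) : Prop := LtSCForIn Set.univ κ δ A
abbrev LamSupercompact (κ lam : ZFSet) : Prop := LamSupercompactIn Set.univ κ lam
abbrev LtSupercompact (κ δ : ZFSet) : Prop := LtSupercompactIn Set.univ κ δ
abbrev Woodin (δ : ZFSet) : Prop := WoodinIn Set.univ δ
abbrev WoodinSC (δ : ZFSet) : Prop := WoodinSCIn Set.univ δ
abbrev Vopenka (δ : ZFSet) : Prop := VopenkaIn Set.univ δ
abbrev IsCard (κ : ZFSet) : Prop := IsCardIn Set.univ κ
abbrev Inaccessible (δ : ZFSet) : Prop := InaccessibleIn Set.univ δ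
abbrev Covers (M : Set ZFSet) (j : ZFSet → ZFSet) (κ lam : ZFSet) : Prop :=
  CoversIn Set.univ M j κ lam
abbrev VIncl (M : Set ZFSet) (lam : ZFSet) : Prop := VInclIn Set.univ M lam
abbrev AgreeBelow (lam A B : ZFSet) : Prop := AgreeBelowIn Set.univ lam A B
abbrev SeqClosed (M : Set ZFSet) (lam : ZFSet) : Prop := SeqClosedIn Set.univ M lam

/-!
Every `κ` that is `lam`-strongly compact for some set is the critical point of an embedding
`j : V → M`. Such a `κ` is uncountable, and a function whose domain `D` is fixed pointwise by `j`
(an ordinal `α < κ`, or `𝒫(α)`) cannot be cofinal in `κ`; in particular `2^α < κ` for `α < κ`.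
All transfers along `j` go through bounded formulas, which are absolute for the transitive
class `M`.

If `α` is the least element of `A`, a cardinal `κ` that is `<δ`-strongly compact for `A` lies
above `α`: otherwise `j A` and `A` agree below `α + 1`, which forces `j α = α`, and then
`α < j κ` gives `α < κ`. Hence `δ` is a limit of `<δ`-strongly compact cardinals, and a strong
limit. For regularity, let `f : α → δ` be cofinal and `A = {α} ∪ (ran f \ α)`, with `κ > α`
as above. Some value `μ ≥ κ` of `f` lies in `A`, so `A ∩ κ` is unbounded in `κ`; but `f`,
having domain `α < κ`, is bounded below `κ` on the arguments it sends below `κ`.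
-/

open ZFSet

attribute [local instance] Classical.allZFSetDefinable

@[simp] theorem comp_vecCons {α β : Type*} {n : ℕ} (f : α → β) (a : α) (v : Fin n → α) :
    f ∘ Matrix.vecCons a v = Matrix.vecCons (f a) (f ∘ v) :=
  Fin.comp_cons f a v

@[simp] theorem comp_vecEmpty {α β : Type*} (f : α → β) : f ∘ (![] : Fin 0 → α) = ![] :=
  Matrix.empty_eq _

namespace Fml

variable {n : ℕ}

def bex (i : Fin n) (φ : Fml (n + 1)) : Fml n := .ex (.and (.mem (Fin.last n) i.castSucc) φ)

def ball (i : Fin n) (φ : Fml (n + 1)) : Fml n := .not (bex i (.not φ))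

inductive IsBounded : ∀ {n : ℕ}, Fml n → Prop
  | mem {n : ℕ} (i j : Fin n) : IsBounded (.mem i j)
  | eq {n : ℕ} (i j : Fin n) : IsBounded (.eq i j)
  | not {n : ℕ} {φ : Fml n} : IsBounded φ → IsBounded (.not φ)
  | and {n : ℕ} {φ ψ : Fml n} : IsBounded φ → IsBounded ψ → IsBounded (.and φ ψ)
  | bex {n : ℕ} (i : Fin n) {φ : Fml (n + 1)} : IsBounded φ → IsBounded (bex i φ)

section Realize

variable {C : Set ZFSet} {v : Fin n → ZFSet}

@[simp] theorem realize_mem (i j : Fin n) : Realize C (.mem i j) v ↔ v i ∈ v j := Iff.rfl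

@[simp] theorem realize_eq (i j : Fin n) : Realize C (.eq i j) v ↔ v i = v j := Iff.rfl

@[simp] theorem realize_not (φ : Fml n) : Realize C (.not φ) v ↔ ¬ Realize C φ v := Iff.rfl

@[simp] theorem realize_and (φ ψ : Fml n) :
    Realize C (.and φ ψ) v ↔ Realize C φ v ∧ Realize C ψ v := Iff.rfl

@[simp] theorem realize_or (φ ψ : Fml n) :
    Realize C (Fml.or φ ψ) v ↔ Realize C φ v ∨ Realize C ψ v := by
  simp [Fml.or, or_iff_not_and_not]

@[simp] theorem realize_imp (φ ψ : Fml n) :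
    Realize C (Fml.imp φ ψ) v ↔ (Realize C φ v → Realize C ψ v) := by
  simp [Fml.imp, imp_iff_not_or]

theorem realize_bex_of_transClass (hC : TransClass C) (i : Fin n) (φ : Fml (n + 1))
    (hi : v i ∈ C) : Realize C (bex i φ) v ↔ ∃ x ∈ v i, Realize C φ (Fin.snoc v x) := by
  simp only [bex, Realize, Fin.snoc_last, Fin.snoc_castSucc]
  exact ⟨fun ⟨x, _, hx⟩ => ⟨x, hx⟩, fun ⟨x, hx⟩ => ⟨x, hC _ hi _ hx.1, hx⟩⟩

@[simp] theorem realize_bex (i : Fin n) (φ : Fml (n + 1)) :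
    Realize Set.univ (bex i φ) v ↔ ∃ x ∈ v i, Realize Set.univ φ (Fin.snoc v x) :=
  realize_bex_of_transClass (fun _ _ _ _ => trivial) i φ trivial

@[simp] theorem realize_ball (i : Fin n) (φ : Fml (n + 1)) :
    Realize Set.univ (ball i φ) v ↔ ∀ x ∈ v i, Realize Set.univ φ (Fin.snoc v x) := by
  simp [ball]

end Realize

theorem IsBounded.realize_iff {C : Set ZFSet} (hC : TransClass C) {φ : Fml n}
    (hφ : φ.IsBounded) {v : Fin n → ZFSet} (hv : ∀ i, v i ∈ C) :
    Realize C φ v ↔ Realize Set.univ φ v := by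
  induction hφ with
  | mem | eq => rfl
  | not _ ih => exact (ih hv).not
  | and _ _ ih₁ ih₂ => exact and_congr (ih₁ hv) (ih₂ hv)
  | bex i _ ih =>
    rw [realize_bex_of_transClass hC _ _ (hv i), realize_bex]
    refine exists_congr fun x => and_congr_right fun hx => ih fun k => ?_
    refine Fin.lastCases ?_ (fun k => ?_) k
    · simpa using hC _ (hv i) _ hx
    · simpa using hv k

section Library

variable {v : Fin n → ZFSet}

def subsetFml (i j : Fin n) : Fml n := ball i (.mem (Fin.last n) j.castSucc)

@[simp] theorem realize_subsetFml (i j : Fin n) :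
    Realize Set.univ (subsetFml i j) v ↔ v i ⊆ v j := by
  simp [subsetFml, subset_def]

def isEmptyFml (i : Fin n) : Fml n := ball i (.not (.eq (Fin.last n) (Fin.last n)))

@[simp] theorem realize_isEmptyFml (i : Fin n) :
    Realize Set.univ (isEmptyFml i) v ↔ v i = ∅ := by
  simp [isEmptyFml, eq_empty]

def isInsertFml (s a b : Fin n) : Fml n :=
  .and (ball s (Fml.or (.eq (Fin.last n) a.castSucc) (.mem (Fin.last n) b.castSucc)))
    (.and (.mem a s) (subsetFml b s))

@[simp] theorem realize_isInsertFml (s a b : Fin n) :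
    Realize Set.univ (isInsertFml s a b) v ↔ v s = insert (v a) (v b) := by
  simp only [isInsertFml, realize_and, realize_ball, realize_or, realize_eq, realize_mem,
    realize_subsetFml, Fin.snoc_last, Fin.snoc_castSucc]
  refine ⟨fun ⟨h₁, h₂, h₃⟩ => ZFSet.ext fun z => ?_, ?_⟩
  · exact ⟨fun hz => mem_insert_iff.2 (h₁ z hz),
      fun hz => (mem_insert_iff.1 hz).elim (· ▸ h₂) (h₃ ·)⟩
  · rintro h
    rw [h]
    exact ⟨fun z => mem_insert_iff.1, mem_insert _ _, fun z => mem_insert_of_mem _⟩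

def isTransitiveFml (i : Fin n) : Fml n := ball i (subsetFml (Fin.last n) i.castSucc)

@[simp] theorem realize_isTransitiveFml (i : Fin n) :
    Realize Set.univ (isTransitiveFml i) v ↔ (v i).IsTransitive := by
  simp [isTransitiveFml, IsTransitive]

def isOrdinalFml (i : Fin n) : Fml n :=
  .and (isTransitiveFml i) (ball i (isTransitiveFml (Fin.last n)))

@[simp] theorem realize_isOrdinalFml (i : Fin n) :
    Realize Set.univ (isOrdinalFml i) v ↔ (v i).IsOrdinal := by
  simp [isOrdinalFml, isOrdinal_iff_forall_mem_isTransitive]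

def isPairFml (u a b : Fin n) : Fml n :=
  .and (ball u (Fml.or (.eq (Fin.last n) a.castSucc) (.eq (Fin.last n) b.castSucc)))
    (.and (.mem a u) (.mem b u))

@[simp] theorem realize_isPairFml (u a b : Fin n) :
    Realize Set.univ (isPairFml u a b) v ↔ v u = {v a, v b} := by
  simp only [isPairFml, realize_and, realize_ball, realize_or, realize_eq, realize_mem,
    Fin.snoc_last, Fin.snoc_castSucc]
  refine ⟨fun ⟨h₁, h₂, h₃⟩ => ZFSet.ext fun z => ?_, ?_⟩
  · exact ⟨fun hz => mem_pair.2 (h₁ z hz), fun hz => (mem_pair.1 hz).elim (· ▸ h₂) (· ▸ h₃)⟩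
  · rintro h
    simp [h]

/-- The Kuratowski pair `{{a}, {a, b}}`, with `{a}` written as `{a, a}`. -/
def isKPairFml (p a b : Fin n) : Fml n :=
  .and (ball p (Fml.or (isPairFml (Fin.last n) a.castSucc a.castSucc)
      (isPairFml (Fin.last n) a.castSucc b.castSucc)))
    (.and (bex p (isPairFml (Fin.last n) a.castSucc a.castSucc))
      (bex p (isPairFml (Fin.last n) a.castSucc b.castSucc)))

@[simp] theorem realize_isKPairFml (p a b : Fin n) :
    Realize Set.univ (isKPairFml p a b) v ↔ v p = (v a).pair (v b) := by
  simp only [isKPairFml, realize_and, realize_ball, realize_bex, realize_or, realize_isPairFml,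
    Fin.snoc_last, Fin.snoc_castSucc, pair_eq_singleton, exists_eq_right]
  refine ⟨fun ⟨h₁, h₂, h₃⟩ => ZFSet.ext fun z => ?_, ?_⟩
  · exact ⟨fun hz => mem_pair.2 (h₁ z hz), fun hz => (mem_pair.1 hz).elim (· ▸ h₂) (· ▸ h₃)⟩
  · rintro h
    simp [h, ZFSet.pair]

def pairMemFml (a b f : Fin n) : Fml n := bex f (isKPairFml (Fin.last n) a.castSucc b.castSucc)

@[simp] theorem realize_pairMemFml (a b f : Fin n) :
    Realize Set.univ (pairMemFml a b f) v ↔ (v a).pair (v b) ∈ v f := by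
  simp [pairMemFml]

end Library

end Fml

theorem isOrd_iff_isOrdinal {x : ZFSet} : IsOrd x ↔ x.IsOrdinal :=
  isOrdinal_iff_forall_mem_isTransitive.symm

theorem _root_.Ordinal.toZFSet_natCast (n : ℕ) : (n : Ordinal).toZFSet = mk (PSet.ofNat n) := by
  induction n with
  | zero => simp [Ordinal.toZFSet_zero]; rfl
  | succ n ih => rw [Nat.cast_succ, Ordinal.toZFSet_add_one, ih]; rfl

theorem _root_.Ordinal.toZFSet_omega0 : Ordinal.omega0.toZFSet = ZFSet.omega := by
  ext x
  simp only [Ordinal.mem_toZFSet_iff, Ordinal.lt_omega0]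
  constructor
  · rintro ⟨_, ⟨n, rfl⟩, rfl⟩
    rw [Ordinal.toZFSet_natCast]
    induction n with
    | zero => exact omega_zero
    | succ n ih => exact omega_succ ih
  · refine Quotient.inductionOn x ?_
    rintro x ⟨⟨n⟩, h⟩
    exact ⟨n, ⟨n, rfl⟩, by rw [Ordinal.toZFSet_natCast]; exact (ZFSet.sound h).symm⟩

theorem isOrdinal_omega : ZFSet.omega.IsOrdinal :=
  Ordinal.toZFSet_omega0 ▸ isOrdinal_toZFSet _

theorem card_omega : ZFSet.omega.card = Cardinal.aleph0 := by
  rw [← Ordinal.toZFSet_omega0, Ordinal.card_toZFSet, Ordinal.card_omega0]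

theorem eq_empty_or_eq_insert_of_mem_omega {x : ZFSet} (hx : x ∈ ZFSet.omega) :
    x = ∅ ∨ ∃ y ∈ x, x = insert y y := by
  rw [← Ordinal.toZFSet_omega0, Ordinal.mem_toZFSet_iff] at hx
  obtain ⟨_, ha, rfl⟩ := hx
  obtain ⟨n, rfl⟩ := Ordinal.lt_omega0.1 ha
  cases n with
  | zero => exact .inl (by simp [Ordinal.toZFSet_zero])
  | succ n =>
    rw [Nat.cast_succ, Ordinal.toZFSet_add_one]
    exact .inr ⟨_, mem_insert _ _, rfl⟩

noncomputable def graph (F : ZFSet → ZFSet) (d : ZFSet) : ZFSet := image (fun z => z.pair (F z)) d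

theorem pair_mem_graph {F : ZFSet → ZFSet} {d x y : ZFSet} :
    x.pair y ∈ graph F d ↔ x ∈ d ∧ y = F x := by
  simp only [graph, mem_image]
  constructor
  · rintro ⟨z, hz, he⟩
    obtain ⟨rfl, rfl⟩ := pair_injective he
    exact ⟨hz, rfl⟩
  · rintro ⟨hx, rfl⟩
    exact ⟨x, hx, rfl⟩

theorem isFuncOn_graph (F : ZFSet → ZFSet) (d : ZFSet) : IsFuncOn d (graph F d) := by
  refine ⟨fun p hp => ?_, fun a ha => ⟨F a, pair_mem_graph.2 ⟨ha, rfl⟩, ?_⟩⟩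
  · obtain ⟨z, hz, rfl⟩ := mem_image.1 hp
    exact ⟨z, F z, hz, rfl⟩
  · exact fun y hy => (pair_mem_graph.1 hy).2

theorem setLeIn_of_injOn {a b : ZFSet} (F : ZFSet → ZFSet) (hF : ∀ z ∈ a, F z ∈ b)
    (hinj : ∀ z ∈ a, ∀ z' ∈ a, F z = F z' → z = z') : SetLeIn Set.univ a b := by
  refine ⟨graph F a, trivial, isFuncOn_graph F a, fun x y hxy => ?_, fun x x' y h h' => ?_⟩
  · obtain ⟨hx, rfl⟩ := pair_mem_graph.1 hxy
    exact hF x hx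
  · obtain ⟨hx, rfl⟩ := pair_mem_graph.1 h
    obtain ⟨hx', he⟩ := pair_mem_graph.1 h'
    exact hinj x hx x' hx' he

theorem exists_embedding_of_card_le {a b : ZFSet} (h : a.card ≤ b.card) : Nonempty (a ↪ b) := by
  rw [← Cardinal.lift_le.{_ + 1}, ← cardinalMk_coe_sort, ← cardinalMk_coe_sort] at h
  exact h

theorem setLeIn_of_card_le {a b : ZFSet} (h : a.card ≤ b.card) : SetLeIn Set.univ a b := by
  classical
  obtain ⟨e⟩ := exists_embedding_of_card_le h
  refine setLeIn_of_injOn (fun z => if hz : z ∈ a then e ⟨z, hz⟩ else ∅) (fun z hz => ?_)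
    (fun z hz z' hz' he => ?_)
  · simp only [dif_pos hz]
    exact (e ⟨z, hz⟩).2
  · simp only [dif_pos hz, dif_pos hz'] at he
    exact congrArg Subtype.val (e.injective (Subtype.ext he))

theorem exists_surjOn_of_card_le {a b : ZFSet} (h : b.card ≤ a.card) (hb : b.Nonempty) :
    ∃ F : ZFSet → ZFSet, (∀ z ∈ a, F z ∈ b) ∧ ∀ y ∈ b, ∃ z ∈ a, F z = y := by
  classical
  obtain ⟨e⟩ := exists_embedding_of_card_le h
  have : Nonempty b := let ⟨y, hy⟩ := hb; ⟨⟨y, hy⟩⟩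
  let g : a → b := Function.invFun e
  refine ⟨fun z => if hz : z ∈ a then g ⟨z, hz⟩ else ∅, fun z hz => ?_, fun y hy => ?_⟩
  · simp only [dif_pos hz]
    exact (g ⟨z, hz⟩).2
  · refine ⟨e ⟨y, hy⟩, (e ⟨y, hy⟩).2, ?_⟩
    simp only [Subtype.coe_eta, dif_pos (e ⟨y, hy⟩).2, g, Function.leftInverse_invFun e.injective _]

theorem oLe_insert_of_subset {x y : ZFSet} (hx : x.IsOrdinal) (hy : y.IsOrdinal) (h : x ⊆ y) :
    oLe x (insert y y) :=
  .inl (mem_insert_iff.2 ((hx.subset_iff_eq_or_mem hy).1 h))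

theorem IsCardIn.insert_mem {δ β : ZFSet} (hδ : IsCard δ) (hω : ZFSet.omega ∈ δ) (hβ : β ∈ δ) :
    insert β β ∈ δ := by
  have hδo := isOrd_iff_isOrdinal.1 hδ.1
  have hβo := hδo.mem hβ
  have hsub : insert β β ⊆ δ := fun z hz =>
    (mem_insert_iff.1 hz).elim (· ▸ hβ) (hδo.mem_trans · hβ)
  refine (((isOrdinal_succ hβo).subset_iff_eq_or_mem hδo).1 hsub).resolve_left fun heq => ?_
  have hωβ : ZFSet.omega ⊆ β := by
    rw [← heq] at hω
    rcases mem_insert_iff.1 hω with h | h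
    exacts [h ▸ subset_rfl, hβo.subset_of_mem h]
  refine hδ.2 β hβ (setLeIn_of_card_le ?_)
  rw [← heq, card_insert (mem_irrefl β), Cardinal.add_one_of_aleph0_le]
  exact card_omega ▸ card_mono hωβ

section Embedding

open Fml

variable {M : Set ZFSet} (j : ElemEmb Set.univ M)

theorem ElemEmb.realize_iff (hM : TransClass M) {n : ℕ} {φ : Fml n} (hφ : φ.IsBounded)
    (v : Fin n → ZFSet) : Realize Set.univ φ v ↔ Realize Set.univ φ (j.toFun ∘ v) :=
  (j.elem φ v fun _ => trivial).trans (hφ.realize_iff hM fun _ => j.maps _ trivial)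

theorem ElemEmb.mem_iff {x y : ZFSet} : j.toFun x ∈ j.toFun y ↔ x ∈ y := by
  simpa using (j.elem (.mem 0 1) ![x, y] fun _ => trivial).symm

theorem ElemEmb.map_subset (hM : TransClass M) {x y : ZFSet} (h : x ⊆ y) :
    j.toFun x ⊆ j.toFun y := by
  simpa using (j.realize_iff hM (φ := subsetFml 0 1) (by repeat' constructor) ![x, y]).1
    (by simpa using h)

theorem ElemEmb.map_empty (hM : TransClass M) : j.toFun ∅ = ∅ := by
  simpa using (j.realize_iff hM (φ := isEmptyFml 0) (by repeat' constructor) ![∅]).1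
    (by simp)

theorem ElemEmb.map_insert (hM : TransClass M) (x y : ZFSet) :
    j.toFun (insert x y) = insert (j.toFun x) (j.toFun y) := by
  simpa using (j.realize_iff hM (φ := isInsertFml 0 1 2) (by repeat' constructor)
    ![insert x y, x, y]).1 (by simp)

theorem ElemEmb.isOrdinal_map (hM : TransClass M) {x : ZFSet} (hx : x.IsOrdinal) :
    (j.toFun x).IsOrdinal := by
  simpa using (j.realize_iff hM (φ := isOrdinalFml 0) (by repeat' constructor) ![x]).1
    (by simpa using hx)

variable {j} {κ : ZFSet}

theorem IsCrit.isOrdinal (hc : IsCrit j κ) : κ.IsOrdinal := isOrd_iff_isOrdinal.1 hc.1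

theorem IsCrit.mem_map (hM : TransClass M) (hc : IsCrit j κ) : κ ∈ j.toFun κ := by
  refine ((hc.isOrdinal.subset_iff_eq_or_mem (j.isOrdinal_map hM hc.isOrdinal)).1
    fun ξ hξ => ?_).resolve_left (Ne.symm hc.2.1)
  rw [← hc.2.2 ξ hξ]
  exact (j.mem_iff).2 hξ

theorem IsCrit.map_eq_of_subset (hM : TransClass M) (hc : IsCrit j κ) {z α : ZFSet}
    (hz : z ⊆ α) (hα : α ∈ κ) : j.toFun z = z := by
  have hjz : j.toFun z ⊆ α := hc.2.2 α hα ▸ j.map_subset hM hz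
  have key : ∀ w ∈ α, w ∈ j.toFun z ↔ w ∈ z := fun w hw => by
    conv_lhs => rw [← hc.2.2 w (hc.isOrdinal.mem_trans hw hα)]
    exact j.mem_iff
  ext w
  exact ⟨fun hw => (key w (hjz hw)).1 hw, fun hw => (key w (hz hw)).2 hw⟩

theorem IsCrit.omega_subset (hM : TransClass M) (hc : IsCrit j κ) : ZFSet.omega ⊆ κ := by
  refine (hc.isOrdinal.notMem_iff_subset isOrdinal_omega).1 fun hκ => hc.2.1 ?_
  rcases eq_empty_or_eq_insert_of_mem_omega hκ with rfl | ⟨y, hy, rfl⟩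
  · exact j.map_empty hM
  · rw [j.map_insert hM, hc.2.2 y hy]

end Embedding

section CriticalPoint

open Fml

variable {M : Set ZFSet} {j : ElemEmb Set.univ M} {κ : ZFSet}

/-- If `f` were cofinal in `κ`, elementarity would give `(x, y) ∈ j f` with `x = j x ∈ D` and
`κ ≤ y < j κ`. But then `y = j (f x)`, and `j (f x) ∈ j κ` forces `f x ∈ κ`, so `y = f x < κ`. -/
theorem IsCrit.exists_bound_of_isFuncOn (hM : TransClass M) (hc : IsCrit j κ) {D f : ZFSet}
    (hD : ∀ x ∈ j.toFun D, x ∈ D ∧ j.toFun x = x) (hf : IsFuncOn D f) :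
    ∃ β ∈ κ, ∀ x y : ZFSet, x.pair y ∈ f → y ∈ κ → y ∈ β := by
  by_contra! hunb
  have hunb' : ∀ β ∈ κ, ∃ x ∈ D, ∃ y ∈ κ, x.pair y ∈ f ∧ y ∉ β := fun β hβ => by
    obtain ⟨x, y, hxy, hyκ, hyβ⟩ := hunb β hβ
    obtain ⟨a, b, ha, he⟩ := hf.1 _ hxy
    obtain ⟨rfl, rfl⟩ := pair_injective he
    exact ⟨x, ha, y, hyκ, hxy, hyβ⟩
  have hunbM := (j.realize_iff hM
    (φ := ball 2 (bex 1 (bex 2 (.and (pairMemFml 4 5 0) (.not (.mem 5 3))))))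
    (by repeat' constructor) ![f, D, κ]).1 (by simpa using hunb')
  simp at hunbM
  obtain ⟨x, hxD, y, hyκ, hxy, hy⟩ := hunbM κ (hc.mem_map hM)
  obtain ⟨hx, hjx⟩ := hD x hxD
  obtain ⟨y₀, -, hy₀⟩ := hf.2 x hx
  have hy₀M := (j.realize_iff hM (φ := ball 3 (.imp (pairMemFml 1 4 0) (.eq 4 2)))
    (by repeat' constructor) ![f, x, y₀, κ]).1 (by simpa using fun y _ => hy₀ y)
  simp [hjx] at hy₀M
  replace hy₀ : y = j.toFun y₀ := hy₀M y hyκ hxy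
  rw [hy₀, j.mem_iff] at hyκ
  rw [hy₀, hc.2.2 y₀ hyκ] at hy
  exact hy hyκ

theorem IsCrit.exists_bound_of_isFuncOn_of_mem (hM : TransClass M) (hc : IsCrit j κ)
    {α f : ZFSet} (hα : α ∈ κ) (hf : IsFuncOn α f) :
    ∃ β ∈ κ, ∀ x y : ZFSet, x.pair y ∈ f → y ∈ κ → y ∈ β := by
  refine hc.exists_bound_of_isFuncOn hM (fun x hx => ?_) hf
  rw [hc.2.2 α hα] at hx
  exact ⟨hx, hc.2.2 x (hc.isOrdinal.mem_trans hx hα)⟩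

theorem IsCrit.setLeIn_powersetIn (hM : TransClass M) (hc : IsCrit j κ) {α : ZFSet}
    (hα : α ∈ κ) : SetLeIn Set.univ (powersetIn Set.univ α) κ := by
  set P := powersetIn Set.univ α
  have hP : ∀ z, z ∈ P ↔ z ⊆ α := by simp [P, powersetIn]
  by_contra hle
  have hκP : κ.card ≤ P.card := (le_total _ _).resolve_left (hle ∘ setLeIn_of_card_le)
  obtain ⟨F, -, hFsurj⟩ := exists_surjOn_of_card_le hκP ⟨α, hα⟩
  have hPM := (j.realize_iff hM (φ := ball 0 (subsetFml 2 1)) (by repeat' constructor)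
    ![P, α]).1 (by simpa using fun z => (hP z).1)
  simp [hc.2.2 α hα] at hPM
  have hD : ∀ x ∈ j.toFun P, x ∈ P ∧ j.toFun x = x := fun x hx =>
    ⟨(hP x).2 (hPM x hx), hc.map_eq_of_subset hM (hPM x hx) hα⟩
  obtain ⟨β, hβκ, hβ⟩ := hc.exists_bound_of_isFuncOn hM hD (isFuncOn_graph F P)
  obtain ⟨z, hz, rfl⟩ := hFsurj β hβκ
  exact mem_irrefl _ (hβ z (F z) (pair_mem_graph.2 ⟨hz, rfl⟩) hβκ)

end CriticalPoint

section StrongCompactness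

open Fml

variable {κ lam A : ZFSet}

theorem LamSCForIn.lamSCIn (h : LamSCForIn Set.univ κ lam A) : LamSCIn Set.univ κ lam := by
  obtain ⟨M, hMs, hM, j, hc, hlt, hcov, -⟩ := h
  obtain ⟨s, hsM, hs, hcard⟩ := hcov (image j.toFun lam) trivial
    (fun _ hx => by obtain ⟨ξ, -, rfl⟩ := mem_image.1 hx; exact j.maps ξ trivial)
    (setLeIn_of_card_le card_image_le)
  exact ⟨M, hMs, hM, j, hc, hlt, s, hsM, fun ξ hξ => hs (mem_image.2 ⟨ξ, hξ, rfl⟩), hcard⟩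

def IsCofinal (A κ : ZFSet) : Prop := ∀ η ∈ κ, ∃ z ∈ A, z ∈ κ ∧ η ∈ z

/-- Elementarity pulls the witness `μ ∈ j A ∩ j κ` above `η = j η` back below `κ`. -/
theorem LamSCForIn.isCofinal (h : LamSCForIn Set.univ κ lam A) {μ : ZFSet} (hμA : μ ∈ A)
    (hμ : μ ∈ lam) (hκμ : κ ⊆ μ) : IsCofinal A κ := by
  obtain ⟨M, -, hM, j, hc, hlt, -, hagr⟩ := h
  intro η hη
  have hμjκ : μ ∈ j.toFun κ := (j.isOrdinal_map hM hc.isOrdinal).mem_trans hμ hlt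
  have hwit : ∃ z ∈ j.toFun A, z ∈ j.toFun κ ∧ j.toFun η ∈ z :=
    ⟨μ, (hagr μ hμ).1 hμA, hμjκ, by rw [hc.2.2 η hη]; exact hκμ hη⟩
  simpa using (j.realize_iff hM (φ := bex 0 (.and (.mem 3 1) (.mem 2 3)))
    (by repeat' constructor) ![A, κ, η]).2 (by simpa using hwit)

theorem LamSCForIn.mem_of_isLeast (h : LamSCForIn Set.univ κ lam A) {α : ZFSet} (hαA : α ∈ A)
    (hA : ∀ x ∈ A, x ∉ α) (hα : α ∈ lam) : α ∈ κ := by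
  obtain ⟨M, -, hM, j, hc, hlt, -, hagr⟩ := h
  have hjκ := j.isOrdinal_map hM hc.isOrdinal
  have hlamo := hjκ.mem hlt
  have hαo := hlamo.mem hα
  have hAM := (j.realize_iff hM (φ := ball 0 (.not (.mem 2 1))) (by repeat' constructor)
    ![A, α]).1 (by simpa using hA)
  simp at hAM
  -- `α ∈ j A` and `j α` is the least element of `j A`, so `j α ≤ α`; and `j α < α` would put
  -- `j α` into `A` below `α`
  have hjα : j.toFun α = α := by
    rcases ((j.isOrdinal_map hM hαo).subset_iff_eq_or_mem hαo).1
      ((hαo.notMem_iff_subset (j.isOrdinal_map hM hαo)).1 (hAM α ((hagr α hα).1 hαA)))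
      with h | h
    · exact h
    · exact absurd h (hA _ ((hagr _ (hlamo.mem_trans h hα)).2 (j.mem_iff.2 hαA)))
  rw [← j.mem_iff, hjα]
  exact hjκ.mem_trans hα hlt

end StrongCompactness

section WoodinSC

variable {δ : ZFSet}

theorem WoodinSC.isOrdinal (h : WoodinSC δ) : δ.IsOrdinal := isOrd_iff_isOrdinal.1 h.1.1

theorem WoodinSC.omega_mem (h : WoodinSC δ) : ZFSet.omega ∈ δ := by
  obtain ⟨κ, hκδ, hκ⟩ := h.2 ∅ trivial (empty_subset δ)
  obtain ⟨M, -, hM, j, hc, -⟩ := hκ κ (Or.inr rfl) hκδ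
  exact isOrdinal_omega.mem_of_subset_of_mem h.isOrdinal (hc.omega_subset hM) hκδ

theorem WoodinSC.insert_mem (h : WoodinSC δ) {β : ZFSet} (hβ : β ∈ δ) : insert β β ∈ δ :=
  h.1.insert_mem h.omega_mem hβ

theorem WoodinSC.exists_ltSCFor_of_isLeast (h : WoodinSC δ) {A α : ZFSet} (hAδ : A ⊆ δ)
    (hαA : α ∈ A) (hA : ∀ x ∈ A, x ∉ α) : ∃ κ ∈ δ, α ∈ κ ∧ LtSCFor κ δ A := by
  obtain ⟨κ, hκδ, hκ⟩ := h.2 A trivial hAδ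
  refine ⟨κ, hκδ, ?_, hκ⟩
  by_contra hακ
  have hαδ := hAδ hαA
  have hκo := h.isOrdinal.mem hκδ
  have hκα : κ ⊆ α := ((h.isOrdinal.mem hαδ).notMem_iff_subset hκo).1 hακ
  exact hακ ((hκ _ (oLe_insert_of_subset hκo (h.isOrdinal.mem hαδ) hκα)
    (h.insert_mem hαδ)).mem_of_isLeast hαA hA (mem_insert α α))

theorem WoodinSC.isCofinal (h : WoodinSC δ) {κ A μ : ZFSet} (hκ : LtSCFor κ δ A) (hκδ : κ ∈ δ)
    (hμA : μ ∈ A) (hμδ : μ ∈ δ) (hκμ : κ ⊆ μ) : IsCofinal A κ :=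
  (hκ _ (oLe_insert_of_subset (h.isOrdinal.mem hκδ) (h.isOrdinal.mem hμδ) hκμ)
    (h.insert_mem hμδ)).isCofinal hμA (mem_insert μ μ) hκμ

theorem WoodinSC.exists_ltSC_above (h : WoodinSC δ) {α : ZFSet} (hα : α ∈ δ) :
    ∃ κ : ZFSet, α ∈ κ ∧ κ ∈ δ ∧ LtSC κ δ := by
  obtain ⟨κ, hκδ, hακ, hκ⟩ := h.exists_ltSCFor_of_isLeast (A := {α})
    (fun x hx => mem_singleton.1 hx ▸ hα) (mem_singleton.2 rfl)
    (fun x hx => mem_singleton.1 hx ▸ mem_irrefl α)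
  exact ⟨κ, hακ, hκδ, fun lam hκlam hlam => (hκ lam hκlam hlam).lamSCIn⟩

theorem WoodinSC.regularIn (h : WoodinSC δ) : RegularIn Set.univ δ := by
  refine ⟨h.1.1, fun α hα f _ hf hfδ => ?_⟩
  by_contra! hunb
  have hδo := h.isOrdinal
  have hαo := hδo.mem hα
  set A := insert α (ZFSet.sep (fun y => α ∈ y ∧ ∃ x : ZFSet, x.pair y ∈ f) δ)
  have hmemA : ∀ y, y ∈ A ↔ y = α ∨ y ∈ δ ∧ α ∈ y ∧ ∃ x : ZFSet, x.pair y ∈ f := by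
    simp [A, mem_sep]
  obtain ⟨κ, hκδ, hακ, hκ⟩ := h.exists_ltSCFor_of_isLeast (A := A)
    (fun y hy => ((hmemA y).1 hy).elim (· ▸ hα) (·.1)) ((hmemA α).2 (.inl rfl))
    (fun y hy hyα => ((hmemA y).1 hy).elim (fun e => mem_irrefl α (e ▸ hyα))
      (fun h' => mem_asymm hyα h'.2.1))
  have hκo := hδo.mem hκδ
  obtain ⟨M, -, hM, j, hc, -⟩ := hκ κ (Or.inr rfl) hκδ
  obtain ⟨β, hβκ, hβ⟩ := hc.exists_bound_of_isFuncOn_of_mem hM hακ hf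
  obtain ⟨x, μ, hxμ, hμκ⟩ := hunb κ hκδ
  have hμδ := hfδ x μ hxμ
  have hκμ : κ ⊆ μ := ((hδo.mem hμδ).notMem_iff_subset hκo).1 hμκ
  have hcof := h.isCofinal hκ hκδ ((hmemA μ).2 (.inr ⟨hμδ, hκμ hακ, x, hxμ⟩)) hμδ hκμ
  obtain ⟨η, hηκ, hβη, hαη⟩ : ∃ η ∈ κ, β ⊆ η ∧ α ⊆ η :=
    ((hκo.mem hβκ).subset_total hαo).elim (fun hs => ⟨α, hακ, hs, subset_rfl⟩)
      (fun hs => ⟨β, hβκ, subset_rfl, hs⟩)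
  obtain ⟨z, hzA, hzκ, hηz⟩ := hcof η hηκ
  have hzo := hκo.mem hzκ
  rcases (hmemA z).1 hzA with rfl | ⟨-, -, x', hx'z⟩
  · exact mem_irrefl _ (hαo.mem_of_subset_of_mem hzo hαη hηz)
  · exact mem_asymm (hβ x' z hx'z hzκ) ((hκo.mem hβκ).mem_of_subset_of_mem hzo hβη hηz)

theorem WoodinSC.strongLimitIn (h : WoodinSC δ) : StrongLimitIn Set.univ δ := by
  refine ⟨h.1, fun α hα => ?_⟩
  obtain ⟨κ, hακ, hκδ, hκ⟩ := h.exists_ltSC_above hα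
  obtain ⟨M, -, hM, j, hc, -⟩ := hκ κ (Or.inr rfl) hκδ
  exact ⟨κ, hκδ, hc.setLeIn_powersetIn hM hακ⟩

end WoodinSC

/-- **Proposition.**  A Woodin for strong compactness cardinal is an inaccessible
limit of `<δ`-strongly compact cardinals. -/
theorem wsc_inaccessible_limit (δ : ZFSet) (h : WoodinSC δ) :
    Inaccessible δ ∧ ∀ α ∈ δ, ∃ κ : ZFSet, α ∈ κ ∧ κ ∈ δ ∧ LtSC κ δ :=
  ⟨⟨h.omega_mem, h.1, h.regularIn, h.strongLimitIn⟩, fun _ => h.exists_ltSC_above⟩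

end WSC
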